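/- arXiv:2604.24030 — 2 statements merged into one kernel-verified Lean document; each statement's English description precedes it below -/
import Mathlib

section
/- Suppose T > 1 and there exist constants 0 < ν_* ≤ ν(t) ≤ ν* < 1 for all t ∈ [0,T]. Then for every 1 ≤ n ≤ N one has ∑_{k=1}^{n} b^{(ν)}_{k,1} ≤ 1/(1−ν*) + (T^{1−ν_*} − 1)/(1−ν_*). -/
/-!
With `α = 1 - ν(t_k)`, the bound `Γ(1 + α) ≥ α` gives
`b_{k,1} ≤ (t_k^α - t_{k-1}^α) / α = ∫_{t_{k-1}}^{t_k} s^(α-1) ds`. Since `ν_* ≤ ν ≤ ν*`, the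
integrand is at most `s^(-ν*)` on `[0, 1]` and at most `s^(-ν_*)` on `[1, ∞)`, so the sum
telescopes to at most the integral of this majorant over `[0, T]`, which is
`1/(1-ν*) + (T^(1-ν_*) - 1)/(1-ν_*)`.
-/

open Finset Real intervalIntegral

lemma Real.one_le_Gamma_of_le_one {x : ℝ} (hx : 0 < x) (hx1 : x ≤ 1) : 1 ≤ Gamma x := by
  simpa using Gamma_strictAntiOn_Ioc.antitoneOn ⟨hx, hx1⟩ ⟨zero_lt_one, le_rfl⟩ hx1

lemma Real.self_le_Gamma_add_one {x : ℝ} (hx : 0 < x) (hx1 : x ≤ 1) : x ≤ Gamma (x + 1) := by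
  rw [Gamma_add_one hx.ne']
  exact le_mul_of_one_le_right hx.le (one_le_Gamma_of_le_one hx hx1)

lemma one_div_Gamma_two_sub_mul_le {ν a c : ℝ} (hν0 : 0 ≤ ν) (hν1 : ν < 1) (hc : 0 ≤ c)
    (hca : c ≤ a) :
    1 / Gamma (2 - ν) * (a ^ (1 - ν) - c ^ (1 - ν)) ≤
      (a ^ (1 - ν) - c ^ (1 - ν)) / (1 - ν) := by
  have hΓ : 1 - ν ≤ Gamma (2 - ν) := by
    simpa [sub_add_eq_add_sub, one_add_one_eq_two] using
      self_le_Gamma_add_one (x := 1 - ν) (by linarith) (by linarith)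
  have hd : 0 ≤ a ^ (1 - ν) - c ^ (1 - ν) :=
    sub_nonneg.2 (rpow_le_rpow hc hca (by linarith))
  rw [div_eq_mul_one_div _ (1 - ν), mul_comm _ (1 / (1 - ν))]
  exact mul_le_mul_of_nonneg_right (one_div_le_one_div_of_le (by linarith) hΓ) hd

lemma Finset.sum_Icc_one_sub_pred {G : Type*} [AddCommGroup G] (f : ℕ → G) (n : ℕ) :
    ∑ k ∈ Icc 1 n, (f k - f (k - 1)) = f n - f 0 := by
  rw [← Ico_add_one_right_eq_Icc, ← sum_range_sub, range_eq_Ico,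
    ← sum_Ico_add' _ 0 n 1]
  simp

lemma natCast_mul_div_le {T : ℝ} {k N : ℕ} (hT : 0 ≤ T) (hk : k ≤ N) : k * (T / N) ≤ T := by
  rw [mul_div_left_comm]
  exact mul_le_of_le_one_right hT (div_le_one_of_le₀ (by exact_mod_cast hk) N.cast_nonneg)

lemma rpow_sub_rpow_div_eq_integral (a c : ℝ) {α : ℝ} (hα : 0 < α) :
    (a ^ α - c ^ α) / α = ∫ s in c..a, s ^ (α - 1) := by
  rw [integral_rpow (Or.inl (by linarith)), sub_add_cancel]

lemma rpow_sub_rpow_div_le_of_forall_rpow_le {a c α β : ℝ} (hca : c ≤ a) (hα : 0 < α)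
    (hβ : 0 < β) (h : ∀ s ∈ Set.Ioo c a, s ^ (α - 1) ≤ s ^ (β - 1)) :
    (a ^ α - c ^ α) / α ≤ (a ^ β - c ^ β) / β := by
  rw [rpow_sub_rpow_div_eq_integral a c hα, rpow_sub_rpow_div_eq_integral a c hβ]
  exact integral_mono_on_of_le_Ioo hca (intervalIntegrable_rpow' (by linarith))
    (intervalIntegrable_rpow' (by linarith)) h

/-- A primitive of `s ↦ s ^ (β - 1)` on `[0, 1]` continued by a primitive of `s ↦ s ^ (γ - 1)`
on `[1, ∞)`. -/
noncomputable def splitRpowPrimitive (β γ x : ℝ) : ℝ :=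
  min x 1 ^ β / β + max x 1 ^ γ / γ

section splitRpowPrimitive

variable {β γ : ℝ}

lemma splitRpowPrimitive_zero (hβ : β ≠ 0) : splitRpowPrimitive β γ 0 = 1 / γ := by
  simp [splitRpowPrimitive, zero_rpow hβ]

lemma splitRpowPrimitive_of_one_le {x : ℝ} (hx : 1 ≤ x) :
    splitRpowPrimitive β γ x = 1 / β + x ^ γ / γ := by
  simp [splitRpowPrimitive, hx]

lemma monotoneOn_splitRpowPrimitive (hβ : 0 ≤ β) (hγ : 0 ≤ γ) :
    MonotoneOn (splitRpowPrimitive β γ) (Set.Ici 0) := by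
  intro c hc a _ hca
  unfold splitRpowPrimitive
  have hmin : 0 ≤ min c 1 := le_min hc zero_le_one
  gcongr

lemma monotoneOn_splitRpowPrimitive_sub_rpow_div {α : ℝ} (hβ : 0 < β) (hβα : β ≤ α)
    (hαγ : α ≤ γ) :
    MonotoneOn (fun x ↦ splitRpowPrimitive β γ x - x ^ α / α) (Set.Ici 0) := by
  have hα : 0 < α := hβ.trans_le hβα
  have hlow : MonotoneOn (fun x ↦ splitRpowPrimitive β γ x - x ^ α / α) (Set.Icc 0 1) := by
    intro c hc a ha hca
    have key := rpow_sub_rpow_div_le_of_forall_rpow_le hca hα hβ fun s hs ↦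
      rpow_le_rpow_of_exponent_ge (hc.1.trans_lt hs.1) (hs.2.le.trans ha.2) (by linarith)
    simp only [splitRpowPrimitive, min_eq_left ha.2, min_eq_left hc.2, max_eq_right ha.2,
      max_eq_right hc.2]
    rw [sub_div, sub_div] at key
    linarith
  have hhigh : MonotoneOn (fun x ↦ splitRpowPrimitive β γ x - x ^ α / α) (Set.Ici 1) := by
    intro c hc a ha hca
    have key := rpow_sub_rpow_div_le_of_forall_rpow_le hca hα (hα.trans_le hαγ) fun s hs ↦
      rpow_le_rpow_of_exponent_le ((Set.mem_Ici.1 hc).trans hs.1.le) (by linarith)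
    simp only [splitRpowPrimitive_of_one_le (Set.mem_Ici.1 ha),
      splitRpowPrimitive_of_one_le (Set.mem_Ici.1 hc)]
    rw [sub_div, sub_div] at key
    linarith
  rw [← Set.Icc_union_Ici_eq_Ici zero_le_one]
  exact hlow.union_right hhigh (isGreatest_Icc zero_le_one) isLeast_Ici

lemma rpow_sub_rpow_div_le_splitRpowPrimitive_sub {α a c : ℝ} (hβ : 0 < β) (hβα : β ≤ α)
    (hαγ : α ≤ γ) (hc : 0 ≤ c) (hca : c ≤ a) :
    (a ^ α - c ^ α) / α ≤ splitRpowPrimitive β γ a - splitRpowPrimitive β γ c := by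
  have := monotoneOn_splitRpowPrimitive_sub_rpow_div hβ hβα hαγ hc (hc.trans hca) hca
  rw [sub_div]
  linarith

end splitRpowPrimitive

theorem l1_first_coeffs_sum_le_of_one_lt_T_general
    (T : ℝ) (hT : 1 < T) (N : ℕ)
    (τ : ℝ) (hτ : τ = T / N)
    (t : ℕ → ℝ) (ht : ∀ k, t k = k * τ)
    (ν : ℝ → ℝ) (νs νS : ℝ) (hνs : 0 < νs) (hνS : νS < 1)
    (hν : ∀ s ∈ Set.Icc (0 : ℝ) T, νs ≤ ν s ∧ ν s ≤ νS)
    (b : ℕ → ℕ → ℝ)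
    (hb : ∀ n k, 1 ≤ k → k ≤ n → n ≤ N →
      b n k = (1 / Real.Gamma (2 - ν (t n))) *
        ((t n - t (k - 1)) ^ (1 - ν (t n)) - (t n - t k) ^ (1 - ν (t n))))
    (n : ℕ) (hnN : n ≤ N) :
    ∑ k ∈ Finset.Icc 1 n, b k 1 ≤ 1 / (1 - νS) + (T ^ (1 - νs) - 1) / (1 - νs) := by
  have hτ0 : 0 ≤ τ := hτ ▸ div_nonneg (by linarith) N.cast_nonneg
  have ht0 : t 0 = 0 := by simp [ht]
  have ht_nonneg (k : ℕ) : 0 ≤ t k := ht k ▸ by positivity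
  have ht_mono : Monotone t := fun i j hij ↦ by
    rw [ht, ht]; gcongr
  have ht_le_T (k : ℕ) (hk : k ≤ N) : t k ≤ T := ht k ▸ hτ ▸ natCast_mul_div_le (by linarith) hk
  obtain ⟨hνs0, hν0S⟩ := hν 0 ⟨le_rfl, by linarith⟩
  set P := splitRpowPrimitive (1 - νS) (1 - νs)
  have hterm : ∀ k ∈ Icc 1 n, b k 1 ≤ P (t k) - P (t (k - 1)) := by
    intro k hk
    obtain ⟨hk1, hkn⟩ := mem_Icc.1 hk
    obtain ⟨hνk, hνkS⟩ := hν _ ⟨ht_nonneg k, ht_le_T k (hkn.trans hnN)⟩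
    have hpred : t k - t 1 = t (k - 1) := by
      rw [ht, ht, ht, Nat.cast_sub hk1]; ring
    have hpred_le : t (k - 1) ≤ t k := ht_mono (k.sub_le 1)
    rw [hb k 1 le_rfl hk1 (hkn.trans hnN), Nat.sub_self, ht0, sub_zero, hpred]
    exact (one_div_Gamma_two_sub_mul_le (by linarith) (by linarith) (ht_nonneg _) hpred_le).trans
      (rpow_sub_rpow_div_le_splitRpowPrimitive_sub (by linarith) (by linarith) (by linarith)
        (ht_nonneg _) hpred_le)
  calc ∑ k ∈ Icc 1 n, b k 1 ≤ ∑ k ∈ Icc 1 n, (P (t k) - P (t (k - 1))) := sum_le_sum hterm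
    _ = P (t n) - P (t 0) := sum_Icc_one_sub_pred (P ∘ t) n
    _ ≤ P T - P 0 := by
      rw [ht0]
      gcongr
      exact monotoneOn_splitRpowPrimitive (by linarith) (by linarith) (ht_nonneg n)
        (Set.mem_Ici.2 (by linarith)) (ht_le_T n hnN)
    _ = 1 / (1 - νS) + (T ^ (1 - νs) - 1) / (1 - νs) := by
      simp only [P]
      rw [splitRpowPrimitive_of_one_le hT.le, splitRpowPrimitive_zero (by linarith)]
      ring

/-- Suppose T > 1 and 0 < ν_* ≤ ν(t) ≤ ν* < 1 on [0,T]. Then for every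
1 ≤ n ≤ N one has `∑_{k=1}^{n} b k 1 ≤ 1/(1-ν*) + (T^(1-ν_*) - 1)/(1-ν_*)`. -/
theorem l1_first_coeffs_sum_le_of_one_lt_T
    (T : ℝ) (hT : 1 < T) (N : ℕ) (hN : 0 < N)
    (τ : ℝ) (hτ : τ = T / N)
    (t : ℕ → ℝ) (ht : ∀ k, t k = k * τ)
    (ν : ℝ → ℝ) (νs νS : ℝ) (hνs : 0 < νs) (hνS : νS < 1)
    (hν : ∀ s ∈ Set.Icc (0 : ℝ) T, νs ≤ ν s ∧ ν s ≤ νS)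
    (b : ℕ → ℕ → ℝ)
    (hb : ∀ n k, 1 ≤ k → k ≤ n → n ≤ N →
      b n k = (1 / Real.Gamma (2 - ν (t n))) *
        ((t n - t (k - 1)) ^ (1 - ν (t n)) - (t n - t k) ^ (1 - ν (t n))))
    (n : ℕ) (hn1 : 1 ≤ n) (hnN : n ≤ N) :
    ∑ k ∈ Finset.Icc 1 n, b k 1 ≤ 1 / (1 - νS) + (T ^ (1 - νs) - 1) / (1 - νs) :=
  l1_first_coeffs_sum_le_of_one_lt_T_general T hT N τ hτ t ht ν νs νS hνs hνS hν b hb n hnN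
end

section
/- Let φ^0, φ^1, …, φ^N be a sequence in a real inner product space H. Then for every 1 ≤ n ≤ N, ⟨Δ_τ^{ν(t_n)} φ^n, φ^n⟩ ≥ (1/(2τ)) ∑_{k=1}^{n} b^{(ν)}_{n,k} (‖φ^k‖² − ‖φ^{k−1}‖²), i.e. the discrete variable-order Caputo operator satisfies ⟨Δ_τ^{ν(t_n)} φ^n, φ^n⟩ ≥ (1/2) Δ_τ^{ν(t_n)} ‖φ^n‖², where Δ_τ^{ν(t_n)} ‖φ^n‖² denotes (1/τ) ∑_{k=1}^{n} b^{(ν)}_{n,k} (‖φ^k‖² − ‖φ^{k−1}‖²). -/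
open Finset
open scoped RealInnerProductSpace

/-!
Since `2⟪φₖ - φₖ₋₁, φₙ⟫ - (‖φₖ‖² - ‖φₖ₋₁‖²) = ‖φₙ - φₖ₋₁‖² - ‖φₙ - φₖ‖²`, twice the left side
minus the right side is, up to the factor `1/τ`, the sum `∑ bₙₖ (gₖ₋₁ - gₖ)` with
`gₖ = ‖φₙ - φₖ‖² ≥ 0` and `gₙ = 0`. Summation by parts shows this sum is nonnegative once the
weights `bₙₖ` are nonnegative and nondecreasing in `k`; on a uniform mesh `bₙₖ` is a positive
multiple of the increment of `x ↦ x ^ (1 - νₙ)` over `[(n - k) τ, (n - k + 1) τ]`, and this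
function is nondecreasing and concave.
-/

lemma neg_mul_le_sum_mul_sub (a g : ℕ → ℝ) {n : ℕ} (hn : 1 ≤ n) (ha₁ : 0 ≤ a 1)
    (ha : MonotoneOn a (Set.Icc 1 n)) (hg : ∀ k, 0 ≤ g k) :
    -(a n * g n) ≤ ∑ k ∈ Icc 1 n, a k * (g (k - 1) - g k) := by
  induction n, hn using Nat.le_induction with
  | base => simp only [Icc_self, sum_singleton, Nat.sub_self]; nlinarith [hg 0]
  | succ m hm ih =>
    rw [sum_Icc_succ_top (by omega), Nat.add_sub_cancel]
    have h_le : a m ≤ a (m + 1) := ha ⟨hm, by omega⟩ ⟨by omega, le_rfl⟩ (by omega)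
    have h_prev := ih (ha.mono (Set.Icc_subset_Icc_right (by omega)))
    nlinarith [hg m]

lemma norm_sub_sq_sub_norm_sub_sq {E : Type*} [NormedAddCommGroup E] [InnerProductSpace ℝ E]
    (x y z : E) : ‖z - y‖ ^ 2 - ‖z - x‖ ^ 2 = 2 * ⟪x - y, z⟫ - (‖x‖ ^ 2 - ‖y‖ ^ 2) := by
  rw [norm_sub_sq_real, norm_sub_sq_real, inner_sub_left, real_inner_comm x, real_inner_comm y]
  ring

theorem sum_mul_norm_sq_sub_le_two_mul_inner {E : Type*} [NormedAddCommGroup E]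
    [InnerProductSpace ℝ E] (a : ℕ → ℝ) (φ : ℕ → E) {n : ℕ} (hn : 1 ≤ n) (ha₁ : 0 ≤ a 1)
    (ha : MonotoneOn a (Set.Icc 1 n)) :
    ∑ k ∈ Icc 1 n, a k * (‖φ k‖ ^ 2 - ‖φ (k - 1)‖ ^ 2) ≤
      2 * ⟪∑ k ∈ Icc 1 n, a k • (φ k - φ (k - 1)), φ n⟫ := by
  have key := neg_mul_le_sum_mul_sub a (fun k => ‖φ n - φ k‖ ^ 2) hn ha₁ ha fun _ => by positivity
  have hterm : ∀ k, a k * (‖φ n - φ (k - 1)‖ ^ 2 - ‖φ n - φ k‖ ^ 2) =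
      2 * ⟪a k • (φ k - φ (k - 1)), φ n⟫ - a k * (‖φ k‖ ^ 2 - ‖φ (k - 1)‖ ^ 2) := fun k => by
    rw [norm_sub_sq_sub_norm_sub_sq, real_inner_smul_left]; ring
  simp only [hterm, sum_sub_distrib, ← mul_sum, ← sum_inner, sub_self, norm_zero] at key
  linarith

lemma ConcaveOn.antitone_sub_nat_mul {f : ℝ → ℝ} (hf : ConcaveOn ℝ (Set.Ici 0) f) {τ : ℝ}
    (hτ : 0 ≤ τ) : Antitone fun m : ℕ => f ((m + 1) * τ) - f (m * τ) := by
  refine antitone_nat_of_succ_le fun m => ?_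
  have hmid := hf.2 (by positivity : (0 : ℝ) ≤ m * τ) (by positivity : (0 : ℝ) ≤ (m + 2) * τ)
    (by norm_num : (0 : ℝ) ≤ 1 / 2) (by norm_num : (0 : ℝ) ≤ 1 / 2) (by norm_num)
  rw [smul_eq_mul, smul_eq_mul, smul_eq_mul, smul_eq_mul,
    show 1 / 2 * (m * τ) + 1 / 2 * ((m + 2) * τ) = (m + 1) * τ by ring] at hmid
  push_cast
  rw [show ((m : ℝ) + 1 + 1) = m + 2 by ring]
  linarith

lemma sub_eq_natCast_sub_mul {t : ℕ → ℝ} {τ : ℝ} (ht : ∀ k, t k = k * τ) {i j : ℕ} (hij : i ≤ j) :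
    t j - t i = (j - i : ℕ) * τ := by
  rw [ht, ht, Nat.cast_sub hij, sub_mul]

theorem discrete_caputo_norm_sq_inequality_general
    {H : Type*} [NormedAddCommGroup H] [InnerProductSpace ℝ H]
    (T : ℝ) (hT : 0 < T) (N : ℕ)
    (τ : ℝ) (hτ : τ = T / N)
    (t : ℕ → ℝ) (ht : ∀ k, t k = k * τ)
    (ν : ℝ → ℝ) (hν : ∀ s ∈ Set.Icc (0 : ℝ) T, 0 < ν s ∧ ν s < 1)
    (b : ℕ → ℕ → ℝ)
    (hb : ∀ n k, 1 ≤ k → k ≤ n → n ≤ N →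
      b n k = (1 / Real.Gamma (2 - ν (t n))) *
        ((t n - t (k - 1)) ^ (1 - ν (t n)) - (t n - t k) ^ (1 - ν (t n))))
    (φ : ℕ → H)
    (n : ℕ) (hn1 : 1 ≤ n) (hnN : n ≤ N) :
    ⟪(1 / τ) • ∑ k ∈ Finset.Icc 1 n, b n k • (φ k - φ (k - 1)), φ n⟫ ≥
      (1 / (2 * τ)) * ∑ k ∈ Finset.Icc 1 n, b n k * (‖φ k‖ ^ 2 - ‖φ (k - 1)‖ ^ 2) := by
  have hτ₀ : 0 ≤ τ := hτ ▸ by positivity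
  have htn : t n ∈ Set.Icc 0 T := by
    rw [ht, hτ, ← mul_div_left_comm]
    exact ⟨by positivity, mul_le_of_le_one_right hT.le
      (div_le_one_of_le₀ (by exact_mod_cast hnN) N.cast_nonneg)⟩
  obtain ⟨hν₀, hν₁⟩ := hν (t n) htn
  set p := 1 - ν (t n)
  set C := 1 / Real.Gamma (2 - ν (t n))
  have hC : 0 ≤ C := one_div_nonneg.2 (Real.Gamma_pos_of_pos (by linarith)).le
  set w : ℕ → ℝ := fun m => ((m + 1) * τ) ^ p - (m * τ) ^ p
  have hbw : ∀ k ∈ Set.Icc 1 n, b n k = C * w (n - k) := by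
    rintro k ⟨hk₁, hkn⟩
    rw [hb n k hk₁ hkn hnN, sub_eq_natCast_sub_mul ht hkn,
      sub_eq_natCast_sub_mul ht ((k.sub_le 1).trans hkn), show n - (k - 1) = n - k + 1 by omega,
      Nat.cast_succ]
  have hw : Antitone w :=
    (Real.concaveOn_rpow (by linarith) (by linarith)).antitone_sub_nat_mul hτ₀
  have hb_mono : MonotoneOn (b n) (Set.Icc 1 n) := fun k hk l hl hkl => by
    rw [hbw k hk, hbw l hl]
    exact mul_le_mul_of_nonneg_left (hw (tsub_le_tsub_left hkl n)) hC
  have hb₁ : 0 ≤ b n 1 := by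
    rw [hbw 1 ⟨le_rfl, hn1⟩]
    exact mul_nonneg hC <| sub_nonneg.2 <|
      Real.rpow_le_rpow (by positivity) (by gcongr; linarith) (by linarith)
  have key := sum_mul_norm_sq_sub_le_two_mul_inner (b n) φ hn1 hb₁ hb_mono
  rw [ge_iff_le, real_inner_smul_left, mul_comm 2 τ, ← one_div_mul_one_div, mul_assoc]
  exact mul_le_mul_of_nonneg_left (by linarith) (by positivity)

/-- For every 1 ≤ n ≤ N the discrete variable-order Caputo operator
satisfies `⟨Δ_τ^{ν(t_n)} φ^n, φ^n⟩ ≥ (1/(2τ)) ∑_{k=1}^{n} b_{n,k} (‖φ^k‖² - ‖φ^{k-1}‖²)`,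
i.e. `⟨Δ_τ^{ν(t_n)} φ^n, φ^n⟩ ≥ (1/2) Δ_τ^{ν(t_n)} ‖φ^n‖²`. -/
theorem discrete_caputo_norm_sq_inequality
    {H : Type*} [NormedAddCommGroup H] [InnerProductSpace ℝ H]
    (T : ℝ) (hT : 0 < T) (N : ℕ) (hN : 0 < N)
    (τ : ℝ) (hτ : τ = T / N)
    (t : ℕ → ℝ) (ht : ∀ k, t k = k * τ)
    (ν : ℝ → ℝ) (hν : ∀ s ∈ Set.Icc (0 : ℝ) T, 0 < ν s ∧ ν s < 1)
    (b : ℕ → ℕ → ℝ)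
    (hb : ∀ n k, 1 ≤ k → k ≤ n → n ≤ N →
      b n k = (1 / Real.Gamma (2 - ν (t n))) *
        ((t n - t (k - 1)) ^ (1 - ν (t n)) - (t n - t k) ^ (1 - ν (t n))))
    (φ : ℕ → H)
    (n : ℕ) (hn1 : 1 ≤ n) (hnN : n ≤ N) :
    ⟪(1 / τ) • ∑ k ∈ Finset.Icc 1 n, b n k • (φ k - φ (k - 1)), φ n⟫ ≥
      (1 / (2 * τ)) * ∑ k ∈ Finset.Icc 1 n, b n k * (‖φ k‖ ^ 2 - ‖φ (k - 1)‖ ^ 2) :=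
  discrete_caputo_norm_sq_inequality_general T hT N τ hτ t ht ν hν b hb φ n hn1 hnN
end
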